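/- Let A₁ and A₂ be disjoint subsets of {1,…,n} with |A₂| = 2m even and |A₁| = a ≥ 1, and let P₁, …, P_k (k ≥ 1) be partitions of A₂ into pairs that are pairwise disjoint as sets of pairs (no pair belongs to two of the partitions). For each t let W^(t) be the set of vertices of G(n,3,1) of the form {x} ∪ e with x ∈ A₁ and e ∈ P_t. Then for every vertex v ∈ W^(1), the number of vertices u ∈ W^(2) ∪ … ∪ W^(k) adjacent to v in G(n,3,1) equals (k−1)·((m−2) + 2·(a−1)). -/

import Mathlib

/-- The vertices of `G(n,3,1)`: 3-element subsets of `{1, …, n}`. -/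
abbrev Vtx (n : ℕ) := {s : Finset ℕ // s ⊆ Finset.Icc 1 n ∧ s.card = 3}

/-- The graph `G(n,3,1)`: two 3-element subsets of `{1, …, n}` are adjacent
iff they intersect in exactly one element. -/
def G (n : ℕ) : SimpleGraph (Vtx n) where
  Adj a b := (a.1 ∩ b.1).card = 1
  symm := ⟨fun a b (h : (a.1 ∩ b.1).card = 1) => (show (b.1 ∩ a.1).card = 1 by rwa [Finset.inter_comm])⟩
  loopless := ⟨fun a (h : (a.1 ∩ a.1).card = 1) => by rw [Finset.inter_self, a.2.2] at h; omega⟩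

instance (n : ℕ) : DecidableRel (G n).Adj := fun a b =>
  inferInstanceAs (Decidable ((a.1 ∩ b.1).card = 1))

instance (n : ℕ) : Fintype (Vtx n) :=
  Fintype.subtype ((Finset.Icc 1 n).powerset.filter fun s => s.card = 3) (by
    intro s
    simp [Finset.mem_powerset, and_comm])

instance (n : ℕ) (s : Set (Vtx n)) : DecidableRel ((G n).induce s).Adj := fun a b =>
  inferInstanceAs (Decidable (((a : Vtx n).1 ∩ (b : Vtx n).1).card = 1))

/-- The number of edges of `G(n,3,1)` with both endpoints in `W`. -/
def edgesIn (n : ℕ) (W : Finset (Vtx n)) : ℕ :=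
  ((G n).induce (W : Set (Vtx n))).edgeFinset.card

/-- The independence number of `G(n,3,1)`. -/
noncomputable def alpha (n : ℕ) : ℕ :=
  sSup {k | ∃ W : Finset (Vtx n), W.card = k ∧ ∀ u ∈ W, ∀ v ∈ W, ¬ (G n).Adj u v}

/-- The minimal number of edges induced on a vertex subset of cardinality `l`. -/
noncomputable def rmin (n l : ℕ) : ℕ :=
  sInf {m | ∃ W : Finset (Vtx n), W.card = l ∧ edgesIn n W = m}

/-!
Write `v = {x} ∪ e` with `e ∈ P₁`, and take `u = {y} ∪ f` with `y ∈ A₁`, `f ∈ P_t`, `t ≠ 1`.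
Since `A₁` and `A₂` are disjoint, `|v ∩ u| = [x = y] + |e ∩ f|`, and `(y, f) ↦ u` is injective.
As `e ∉ P_t`, every block `f` of `P_t` meets `e` in at most one point, while the blocks cover `e`;
so exactly two blocks meet `e`, each contributing the `a - 1` choices `y ≠ x`, and each of the
other `m - 2` blocks contributes the single choice `y = x`. Different `t` give disjoint `W⁽ᵗ⁾`.
-/

open Finset

structure IsPairPartition {α : Type*} [DecidableEq α] (A : Finset α) (P : Finset (Finset α)) :
    Prop where
  card_eq_two : ∀ f ∈ P, #f = 2
  pairwise_disjoint : (P : Set (Finset α)).Pairwise Disjoint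
  biUnion_eq : P.biUnion id = A

theorem card_inter_le_one_of_card_eq_two {α : Type*} [DecidableEq α] {e f : Finset α}
    (he : #e = 2) (hf : #f = 2) (hne : e ≠ f) : #(e ∩ f) ≤ 1 := by
  by_contra! h
  have hinter : e ∩ f = e := eq_of_subset_of_card_le inter_subset_left (by omega)
  exact hne (eq_of_subset_of_card_le (inter_eq_left.1 hinter) (by omega))

namespace IsPairPartition

variable {α : Type*} [DecidableEq α] {A e : Finset α} {P : Finset (Finset α)}

theorem subset (hP : IsPairPartition A P) {f : Finset α} (hf : f ∈ P) : f ⊆ A :=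
  hP.biUnion_eq ▸ subset_biUnion_of_mem id hf

theorem card_eq (hP : IsPairPartition A P) : #A = 2 * #P := by
  calc
    #A = ∑ f ∈ P, #f := by rw [← hP.biUnion_eq]; exact card_biUnion hP.pairwise_disjoint
    _ = 2 * #P := by rw [sum_congr rfl hP.card_eq_two, sum_const, smul_eq_mul, mul_comm]

theorem sum_card_inter (hP : IsPairPartition A P) (he : e ⊆ A) : ∑ f ∈ P, #(e ∩ f) = #e := by
  have hdisj : (P : Set (Finset α)).PairwiseDisjoint (e ∩ ·) := fun f hf f' hf' hne =>
    (hP.pairwise_disjoint hf hf' hne).mono inter_subset_right inter_subset_right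
  conv_rhs => rw [← inter_eq_left.2 he, ← hP.biUnion_eq, inter_biUnion]
  exact (card_biUnion hdisj).symm

theorem card_filter_card_inter_eq_one (hP : IsPairPartition A P) (he : e ⊆ A) (he₂ : #e = 2)
    (heP : e ∉ P) :
    #{f ∈ P | #(e ∩ f) = 1} = 2 := by
  rw [card_filter, ← he₂, ← hP.sum_card_inter he]
  refine sum_congr rfl fun f hf => ?_
  have := card_inter_le_one_of_card_eq_two he₂ (hP.card_eq_two f hf)
    (ne_of_mem_of_not_mem hf heP).symm
  split_ifs <;> omega

end IsPairPartition

section Insert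

variable {α : Type*} [DecidableEq α]

theorem card_insert_inter_insert {x y : α} {e f : Finset α} (hxf : x ∉ f) (hye : y ∉ e) :
    #(insert x e ∩ insert y f) = (if x = y then 1 else 0) + #(e ∩ f) := by
  split_ifs with hxy
  · subst hxy
    rw [← insert_inter_distrib, card_insert_of_notMem fun h => hxf (mem_inter.1 h).2, add_comm]
  · rw [insert_inter_of_notMem (by simp [hxy, hxf]), inter_insert_of_notMem hye, zero_add]

theorem eq_and_eq_of_insert_eq_insert {B e f : Finset α} {x y : α} (hx : x ∉ B) (hy : y ∉ B)
    (he : e ⊆ B) (hf : f ⊆ B) (h : insert x e = insert y f) : x = y ∧ e = f := by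
  have hef : e = f := by
    rw [← inter_eq_left.2 he, ← inter_eq_left.2 hf, ← insert_inter_of_notMem (s₁ := e) hx,
      ← insert_inter_of_notMem (s₁ := f) hy, h]
  refine ⟨?_, hef⟩
  have hx' : x ∈ insert y f := h ▸ mem_insert_self x e
  exact (mem_insert.1 hx').resolve_right fun hxf => hx (hf hxf)

theorem card_filter_ite_add_eq_one {s : Finset α} {x : α} (hx : x ∈ s) {c : ℕ} (hc : c ≤ 1) :
    #{y ∈ s | (if x = y then 1 else 0) + c = 1} = if c = 1 then #s - 1 else 1 := by
  obtain rfl | rfl : c = 0 ∨ c = 1 := by omega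
  · have hiff : ∀ y, (if x = y then 1 else 0) + 0 = 1 ↔ x = y := fun y => by split_ifs <;> simpa
    rw [filter_congr fun y _ => hiff y, filter_eq, if_pos hx, card_singleton, if_neg zero_ne_one]
  · have hiff : ∀ y, (if x = y then 1 else 0) + 1 = 1 ↔ x ≠ y := fun y => by split_ifs <;> simpa
    rw [filter_congr fun y _ => hiff y, filter_ne, if_pos rfl, card_erase_of_mem hx]

end Insert

section Vertices

variable {n : ℕ} {A₁ A₂ : Finset ℕ} {P : Finset (Finset ℕ)} {W : Finset (Vtx n)}

theorem card_filter_eq_card_filter_product (hA₁ : A₁ ⊆ Icc 1 n) (hA₂ : A₂ ⊆ Icc 1 n)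
    (hdisj : Disjoint A₁ A₂) (hP : IsPairPartition A₂ P)
    (hW : ∀ u : Vtx n, u ∈ W ↔ ∃ y ∈ A₁, ∃ f ∈ P, u.1 = insert y f)
    (p : Finset ℕ → Prop) [DecidablePred p] :
    #{u ∈ W | p u.1} = #{yf ∈ A₁ ×ˢ P | p (insert yf.1 yf.2)} := by
  have hnotMem : ∀ y ∈ A₁, y ∉ A₂ := fun y hy => disjoint_left.1 hdisj hy
  have hvtx : ∀ yf ∈ A₁ ×ˢ P, insert yf.1 yf.2 ⊆ Icc 1 n ∧ #(insert yf.1 yf.2) = 3 := by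
    rintro ⟨y, f⟩ hyf
    obtain ⟨hy, hf⟩ := mem_product.1 hyf
    refine ⟨insert_subset (hA₁ hy) ((hP.subset hf).trans hA₂), ?_⟩
    rw [card_insert_of_notMem fun h => hnotMem y hy (hP.subset hf h), hP.card_eq_two f hf]
  refine (card_bij (fun yf hyf => (⟨insert yf.1 yf.2, hvtx yf (mem_filter.1 hyf).1⟩ : Vtx n))
    ?_ ?_ ?_).symm
  · rintro ⟨y, f⟩ hyf
    obtain ⟨hyf, hp⟩ := mem_filter.1 hyf
    obtain ⟨hy, hf⟩ := mem_product.1 hyf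
    exact mem_filter.2 ⟨(hW _).2 ⟨y, hy, f, hf, rfl⟩, hp⟩
  · rintro ⟨y, f⟩ hyf ⟨y', f'⟩ hyf' h
    obtain ⟨hy, hf⟩ := mem_product.1 (mem_filter.1 hyf).1
    obtain ⟨hy', hf'⟩ := mem_product.1 (mem_filter.1 hyf').1
    obtain ⟨rfl, rfl⟩ := eq_and_eq_of_insert_eq_insert (hnotMem y hy) (hnotMem y' hy')
      (hP.subset hf) (hP.subset hf') (congrArg Subtype.val h)
    rfl
  · intro u hu
    obtain ⟨huW, hp⟩ := mem_filter.1 hu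
    obtain ⟨y, hy, f, hf, hu⟩ := (hW u).1 huW
    exact ⟨(y, f), mem_filter.2 ⟨mem_product.2 ⟨hy, hf⟩, hu ▸ hp⟩, Subtype.ext hu.symm⟩

theorem card_filter_adj_of_notMem (hA₁ : A₁ ⊆ Icc 1 n) (hA₂ : A₂ ⊆ Icc 1 n)
    (hdisj : Disjoint A₁ A₂) (hP : IsPairPartition A₂ P)
    (hW : ∀ u : Vtx n, u ∈ W ↔ ∃ y ∈ A₁, ∃ f ∈ P, u.1 = insert y f)
    {v : Vtx n} {x : ℕ} {e : Finset ℕ} (hx : x ∈ A₁) (he : e ⊆ A₂) (he₂ : #e = 2) (heP : e ∉ P)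
    (hv : v.1 = insert x e) :
    #{u ∈ W | (G n).Adj v u} = (#P - 2) + 2 * (#A₁ - 1) := by
  have hnotMem : ∀ y ∈ A₁, ∀ s ⊆ A₂, y ∉ s := fun y hy s hs h => disjoint_left.1 hdisj hy (hs h)
  have hle : ∀ f ∈ P, #(e ∩ f) ≤ 1 := fun f hf =>
    card_inter_le_one_of_card_eq_two he₂ (hP.card_eq_two f hf) (ne_of_mem_of_not_mem hf heP).symm
  calc #{u ∈ W | (G n).Adj v u}
      = #{yf ∈ A₁ ×ˢ P | #(insert x e ∩ insert yf.1 yf.2) = 1} := by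
        rw [← hv]
        exact card_filter_eq_card_filter_product hA₁ hA₂ hdisj hP hW fun s => #(v.1 ∩ s) = 1
    _ = ∑ f ∈ P, #{y ∈ A₁ | (if x = y then 1 else 0) + #(e ∩ f) = 1} := by
        rw [card_filter, sum_product_right]
        refine sum_congr rfl fun f hf => ?_
        rw [card_filter]
        refine sum_congr rfl fun y hy => ?_
        rw [card_insert_inter_insert (hnotMem x hx f (hP.subset hf)) (hnotMem y hy e he)]
    _ = ∑ f ∈ P, if #(e ∩ f) = 1 then #A₁ - 1 else 1 :=
        sum_congr rfl fun f hf => card_filter_ite_add_eq_one hx (hle f hf)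
    _ = (#P - 2) + 2 * (#A₁ - 1) := by
        have htwo := hP.card_filter_card_inter_eq_one he he₂ heP
        have hsplit := card_filter_add_card_filter_not (s := P) fun f => #(e ∩ f) = 1
        rw [sum_ite, sum_const, sum_const, smul_eq_mul, smul_eq_mul, htwo, mul_one]
        omega

theorem disjoint_of_disjoint_blocks (hdisj : Disjoint A₁ A₂) {Q : Finset (Finset ℕ)}
    {W' : Finset (Vtx n)} (hPQ : Disjoint P Q) (hP : ∀ f ∈ P, f ⊆ A₂) (hQ : ∀ f ∈ Q, f ⊆ A₂)
    (hW : ∀ u : Vtx n, u ∈ W ↔ ∃ y ∈ A₁, ∃ f ∈ P, u.1 = insert y f)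
    (hW' : ∀ u : Vtx n, u ∈ W' ↔ ∃ y ∈ A₁, ∃ f ∈ Q, u.1 = insert y f) : Disjoint W W' := by
  refine disjoint_left.2 fun u hu hu' => ?_
  obtain ⟨y, hy, f, hf, hu⟩ := (hW u).1 hu
  obtain ⟨y', hy', f', hf', hu'⟩ := (hW' u).1 hu'
  obtain ⟨-, rfl⟩ := eq_and_eq_of_insert_eq_insert (disjoint_left.1 hdisj hy)
    (disjoint_left.1 hdisj hy') (hP f hf) (hQ f' hf') (hu.symm.trans hu')
  exact disjoint_left.1 hPQ hf hf'

end Vertices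

theorem stmt_10_general (n m a k : ℕ) (hk : 1 ≤ k) (A₁ A₂ : Finset ℕ)
    (hA₁ : A₁ ⊆ Finset.Icc 1 n) (hA₂ : A₂ ⊆ Finset.Icc 1 n) (hdisj : Disjoint A₁ A₂)
    (hA₁card : A₁.card = a) (hA₂card : A₂.card = 2 * m)
    (P : Fin k → Finset (Finset ℕ))
    (hPpair : ∀ t, ∀ e ∈ P t, e.card = 2)
    (hPdisj : ∀ t, ((P t : Set (Finset ℕ))).Pairwise Disjoint)
    (hPunion : ∀ t, (P t).biUnion id = A₂)
    (hPP : ∀ t t', t ≠ t' → Disjoint (P t) (P t'))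
    (W : Fin k → Finset (Vtx n))
    (hW : ∀ t, ∀ v : Vtx n, v ∈ W t ↔ ∃ x ∈ A₁, ∃ e ∈ P t, v.1 = insert x e)
    (v : Vtx n) (hv : v ∈ W ⟨0, hk⟩) :
    (((Finset.univ.erase (⟨0, hk⟩ : Fin k)).biUnion W).filter
        fun u => (G n).Adj v u).card = (k - 1) * ((m - 2) + 2 * (a - 1)) := by
  have hP : ∀ t, IsPairPartition A₂ (P t) := fun t => ⟨hPpair t, hPdisj t, hPunion t⟩
  have hPcard : ∀ t, #(P t) = m := fun t => by have := (hP t).card_eq; omega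
  obtain ⟨x, hx, e, heP, hve⟩ := (hW _ v).1 hv
  have hcount : ∀ t ∈ univ.erase (⟨0, hk⟩ : Fin k),
      #{u ∈ W t | (G n).Adj v u} = (m - 2) + 2 * (a - 1) := fun t ht => by
    have heP' : e ∉ P t := fun h => disjoint_left.1 (hPP _ _ (ne_of_mem_erase ht)) h heP
    rw [card_filter_adj_of_notMem hA₁ hA₂ hdisj (hP t) (hW t) hx ((hP _).subset heP)
      (hPpair _ e heP) heP' hve, hPcard, hA₁card]
  have hWdisj : (↑(univ.erase (⟨0, hk⟩ : Fin k)) : Set (Fin k)).PairwiseDisjoint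
      fun t => {u ∈ W t | (G n).Adj v u} := fun t _ t' _ htt' =>
    disjoint_filter_filter (disjoint_of_disjoint_blocks hdisj (hPP t t' htt')
      (fun _ => (hP t).subset) (fun _ => (hP t').subset) (hW t) (hW t'))
  rw [filter_biUnion, card_biUnion hWdisj, sum_congr rfl hcount, sum_const, smul_eq_mul,
    card_erase_of_mem (mem_univ _), card_univ, Fintype.card_fin]

/-- Let `A₁, A₂ ⊆ {1, …, n}` be disjoint with `|A₂| = 2m` and `|A₁| = a ≥ 1`, and
let `P₁, …, P_k` (`k ≥ 1`) be pairwise disjoint partitions of `A₂` into pairs.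
Let `W⁽ᵗ⁾` be the set of vertices of `G(n,3,1)` of the form `{x} ∪ e`, `x ∈ A₁`,
`e ∈ P_t`. Then every `v ∈ W⁽¹⁾` has exactly `(k−1)·((m−2) + 2(a−1))` neighbours
in `W⁽²⁾ ∪ ⋯ ∪ W⁽ᵏ⁾`. -/
theorem stmt_10 (n m a k : ℕ) (hk : 1 ≤ k) (ha : 1 ≤ a) (A₁ A₂ : Finset ℕ)
    (hA₁ : A₁ ⊆ Finset.Icc 1 n) (hA₂ : A₂ ⊆ Finset.Icc 1 n) (hdisj : Disjoint A₁ A₂)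
    (hA₁card : A₁.card = a) (hA₂card : A₂.card = 2 * m)
    (P : Fin k → Finset (Finset ℕ))
    (hPpair : ∀ t, ∀ e ∈ P t, e.card = 2)
    (hPdisj : ∀ t, ((P t : Set (Finset ℕ))).Pairwise Disjoint)
    (hPunion : ∀ t, (P t).biUnion id = A₂)
    (hPP : ∀ t t', t ≠ t' → Disjoint (P t) (P t'))
    (W : Fin k → Finset (Vtx n))
    (hW : ∀ t, ∀ v : Vtx n, v ∈ W t ↔ ∃ x ∈ A₁, ∃ e ∈ P t, v.1 = insert x e)
    (v : Vtx n) (hv : v ∈ W ⟨0, hk⟩) :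
    (((Finset.univ.erase (⟨0, hk⟩ : Fin k)).biUnion W).filter
        fun u => (G n).Adj v u).card = (k - 1) * ((m - 2) + 2 * (a - 1)) :=
  stmt_10_general n m a k hk A₁ A₂ hA₁ hA₂ hdisj hA₁card hA₂card P hPpair hPdisj hPunion hPP W hW v
    hv
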